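/- arXiv:2003.09130 — 8 statements merged into one kernel-verified Lean document; each statement's English description precedes it below -/
import Mathlib

section
/- Let K be an algebraically closed valued field of residue characteristic 0, let B be a ball in K (a set of the form {x : val(x − c) ≥ γ} or {x : val(x − c) > γ}), and let P(x) ∈ K[x] be a polynomial. If P has two distinct zeros in B, then the derivative P′ has a zero in B. -/
/-!
Rescale so that the two zeros are `0` and `1`. If every zero of `P'` had valuation `> 1`
(in the multiplicative convention), then, factoring `P'` over the algebraically closed field, its
constant coefficient would strictly dominate all others in valuation. Residue characteristic `0`
means `P` and `P'` have the same coefficient valuations up to the shift, so the linear term of `P`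
would dominate the sum `P(1) - P(0)`, which therefore could not vanish. Zeros of valuation `≤ 1`
of the rescaled derivative lie in the ball by the ultrametric inequality.
-/

open Polynomial

namespace Valuation

variable {K Γ₀ : Type*} [Field K] [LinearOrderedCommGroupWithZero Γ₀] (v : Valuation K Γ₀)

def CoeffZeroDominates (R : K[X]) : Prop :=
  ∀ m ≠ 0, v (R.coeff m) < v (R.coeff 0)

variable {v}

theorem CoeffZeroDominates.map_coeff_zero_pos {R : K[X]} (h : v.CoeffZeroDominates R) :
    0 < v (R.coeff 0) :=
  zero_le.trans_lt (h 1 one_ne_zero)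

theorem CoeffZeroDominates.map_coeff_le {R : K[X]} (h : v.CoeffZeroDominates R) (m : ℕ) :
    v (R.coeff m) ≤ v (R.coeff 0) := by
  rcases eq_or_ne m 0 with rfl | hm
  · exact le_rfl
  · exact (h m hm).le

theorem coeffZeroDominates_C {a : K} (ha : a ≠ 0) : v.CoeffZeroDominates (C a) := by
  intro m hm
  simpa [coeff_C, hm] using v.pos_iff.mpr ha

theorem coeffZeroDominates_X_sub_C {s : K} (hs : 1 < v s) : v.CoeffZeroDominates (X - C s) := by
  intro m hm
  rcases eq_or_ne m 1 with rfl | hm1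
  · simpa using hs
  · simpa [coeff_X, coeff_C, hm, Ne.symm hm1] using zero_lt_one.trans hs

theorem CoeffZeroDominates.mul {R S : K[X]} (hR : v.CoeffZeroDominates R)
    (hS : v.CoeffZeroDominates S) : v.CoeffZeroDominates (R * S) := by
  intro m hm
  rw [mul_coeff_zero, coeff_mul, map_mul]
  refine v.map_sum_lt (mul_pos hR.map_coeff_zero_pos hS.map_coeff_zero_pos).ne' ?_
  rintro ⟨i, j⟩ hij
  rw [Finset.HasAntidiagonal.mem_antidiagonal] at hij
  rw [map_mul]
  rcases eq_or_ne i 0 with rfl | hi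
  · exact mul_lt_mul_of_pos_left (hS j (by simp_all)) hR.map_coeff_zero_pos
  · exact mul_lt_mul_of_lt_of_le_of_nonneg_of_pos (hR i hi) (hS.map_coeff_le j) zero_le
      hS.map_coeff_zero_pos

theorem coeffZeroDominates_of_forall_isRoot [IsAlgClosed K] {R : K[X]}
    (h : ∀ s, R.IsRoot s → 1 < v s) : v.CoeffZeroDominates R := by
  have hR : R ≠ 0 := fun hR => by simpa using h 0 (by simp [hR])
  rw [← C_leadingCoeff_mul_prod_multiset_X_sub_C (IsAlgClosed.card_roots_eq_natDegree (p := R))]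
  refine (coeffZeroDominates_C (leadingCoeff_ne_zero.mpr hR)).mul ?_
  refine Multiset.prod_induction _ _ (fun _ _ => CoeffZeroDominates.mul)
    (by simpa using coeffZeroDominates_C (v := v) one_ne_zero) ?_
  simp only [Multiset.mem_map]
  rintro _ ⟨s, hs, rfl⟩
  exact coeffZeroDominates_X_sub_C (h s (isRoot_of_mem_roots hs))

theorem map_coeff_succ_eq (hres : ∀ m : ℕ, m ≠ 0 → v (m : K) = 1) (Q : K[X]) (i : ℕ) :
    v (Q.coeff (i + 1)) = v ((derivative Q).coeff i) := by
  rw [coeff_derivative, map_mul, ← Nat.cast_succ, hres _ i.succ_ne_zero, mul_one]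

theorem CoeffZeroDominates.eval_one_ne_eval_zero (hres : ∀ m : ℕ, m ≠ 0 → v (m : K) = 1)
    {Q : K[X]} (h : v.CoeffZeroDominates (derivative Q)) : Q.eval 1 ≠ Q.eval 0 := by
  set N := Q.natDegree + 1
  have hsum : Q.eval 1 - Q.eval 0 = ∑ i ∈ Finset.range N, Q.coeff (i + 1) := by
    rw [eval_eq_sum_range' (show Q.natDegree < N + 1 by omega), Finset.sum_range_succ', coeff_zero_eq_eval_zero]
    simp
  have hval : v (Q.eval 1 - Q.eval 0) = v ((derivative Q).coeff 0) := by
    rw [hsum, v.map_sum_eq_of_lt (Finset.mem_range.mpr Q.natDegree.succ_pos), map_coeff_succ_eq hres]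
    intro i hi
    rw [map_coeff_succ_eq hres, map_coeff_succ_eq hres]
    exact h i (by simp_all)
  intro heq
  rw [heq, sub_self, map_zero] at hval
  exact h.map_coeff_zero_pos.ne hval

theorem exists_isRoot_derivative_le_one [IsAlgClosed K] (hres : ∀ m : ℕ, m ≠ 0 → v (m : K) = 1)
    {Q : K[X]} (hQ : Q.eval 0 = Q.eval 1) : ∃ z, (derivative Q).IsRoot z ∧ v z ≤ 1 := by
  by_contra! h
  exact (coeffZeroDominates_of_forall_isRoot h).eval_one_ne_eval_zero hres hQ.symm

theorem map_add_mul_sub_sub_le_max {x y z : K} (hz : v z ≤ 1) (c : K) :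
    v (x + z * (y - x) - c) ≤ max (v (x - c)) (v (y - c)) := by
  have hyx : v (z * (y - x)) ≤ max (v (x - c)) (v (y - c)) := by
    rw [map_mul, show y - x = (y - c) - (x - c) by ring]
    calc v z * v ((y - c) - (x - c)) ≤ 1 * v ((y - c) - (x - c)) := mul_le_mul_left hz _
      _ ≤ max (v (x - c)) (v (y - c)) := by rw [one_mul, max_comm]; exact v.map_sub _ _
  calc v (x + z * (y - x) - c) = v ((x - c) + z * (y - x)) := by ring_nf
    _ ≤ max (v (x - c)) (v (z * (y - x))) := v.map_add _ _
    _ ≤ max (v (x - c)) (v (y - c)) := max_le (le_max_left _ _) hyx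

end Valuation

theorem rolle_acvf_general {K Γ₀ : Type*} [Field K] [IsAlgClosed K]
    [LinearOrderedCommGroupWithZero Γ₀] (v : Valuation K Γ₀)
    (hres : ∀ m : ℕ, m ≠ 0 → v (m : K) = 1)
    (B : Set K)
    (hB : (∃ c γ, B = {x : K | v (x - c) ≤ γ}) ∨ (∃ c γ, B = {x : K | v (x - c) < γ}))
    (P : Polynomial K) (x y : K) (hx : x ∈ B) (hy : y ∈ B) (hxy : x ≠ y)
    (hPx : P.eval x = 0) (hPy : P.eval y = 0) :
    ∃ z ∈ B, (Polynomial.derivative P).eval z = 0 := by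
  set Q := P.comp (C (y - x) * X + C x)
  have hQ : Q.eval 0 = Q.eval 1 := by simp [Q, hPx, hPy]
  obtain ⟨z, hz, hvz⟩ := Valuation.exists_isRoot_derivative_le_one hres hQ
  refine ⟨x + z * (y - x), ?_, ?_⟩
  · rcases hB with ⟨c, γ, rfl⟩ | ⟨c, γ, rfl⟩
    · exact (Valuation.map_add_mul_sub_sub_le_max hvz c).trans (max_le hx hy)
    · exact (Valuation.map_add_mul_sub_sub_le_max hvz c).trans_lt (max_lt hx hy)
  · have hyx : y - x ≠ 0 := sub_ne_zero.mpr hxy.symm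
    simpa [Q, derivative_comp, hyx, add_comm, mul_comm] using hz.eq_zero

/-- valued-field Rolle theorem.  Let `K` be an algebraically closed valued
field of characteristic 0 with residue characteristic 0 (every nonzero integer has valuation
`1`), with valuation written multiplicatively.  Let `B` be a ball (closed `{x | v (x−c) ≤ γ}`
or open `{x | v (x−c) < γ}`, corresponding to `val(x−c) ≥ γ` resp. `> γ` additively) and
`P ∈ K[x]` a polynomial.  If `P` has two distinct zeros in `B`, then `P'` has a zero in `B`. -/
theorem rolle_acvf {K Γ₀ : Type*} [Field K] [IsAlgClosed K] [CharZero K]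
    [LinearOrderedCommGroupWithZero Γ₀] (v : Valuation K Γ₀)
    (hres : ∀ m : ℕ, m ≠ 0 → v (m : K) = 1)
    (B : Set K)
    (hB : (∃ c γ, B = {x : K | v (x - c) ≤ γ}) ∨ (∃ c γ, B = {x : K | v (x - c) < γ}))
    (P : Polynomial K) (x y : K) (hx : x ∈ B) (hy : y ∈ B) (hxy : x ≠ y)
    (hPx : P.eval x = 0) (hPy : P.eval y = 0) :
    ∃ z ∈ B, (Polynomial.derivative P).eval z = 0 :=
  rolle_acvf_general v hres B hB P x y hx hy hxy hPx hPy
end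

section
/- Let K be a field with valuation ring 𝒪, maximal ideal 𝔪, residue field k, and value group Γ, and let D be a mock K/𝔪, i.e., a divisible 𝒪-module equipped with an embedding k ↪ D such that for all x, y ∈ D, x ∈ 𝒪·y or y ∈ 𝒪·x. If K and D are countable, then D is isomorphic, as an 𝒪-module extension of k, to K/𝔪. -/
/-!
Both `K/𝔪` and `D` are countable, divisible and uniserial `𝒪`-modules, and in both the element
`x` with `w • x = 1` (the image of `1 ∈ k`) is killed exactly by the `t` with `v t < v w`.
A back-and-forth over pairs `(a, b)` with a common `w` sending them to the two copies of `1`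
then builds the isomorphism: uniseriality and divisibility let either coordinate absorb any
new element, and the union of the cyclic graphs `𝒪 ∙ (a, b)` is the graph of the isomorphism.
-/

variable {K Γ₀ : Type*} [Field K] [LinearOrderedCommGroupWithZero Γ₀]

/-- The maximal ideal `𝔪 = {x | v x < 1}` of the valuation, as a submodule of `K`
over the valuation ring `v.integer`. -/
def maxIdealSub (v : Valuation K Γ₀) : Submodule v.integer K where
  carrier := {x : K | v x < 1}
  add_mem' := by
    intro a b ha hb
    exact lt_of_le_of_lt (v.map_add a b) (max_lt ha hb)
  zero_mem' := by simp
  smul_mem' := by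
    intro c x hx
    have h1 : v (c : K) ≤ 1 := c.2
    have h : (c • x : K) = (c : K) * x := rfl
    rw [Set.mem_setOf_eq, h, v.map_mul]
    calc v (c : K) * v x ≤ 1 * v x := mul_le_mul_left h1 _
      _ = v x := one_mul _
      _ < 1 := hx

/-- The maximal ideal of the valuation ring `v.integer`. -/
def maxIdealO (v : Valuation K Γ₀) : Ideal v.integer :=
  (maxIdealSub v).comap (Algebra.linearMap v.integer K)

/-- The natural embedding of the residue field `k = 𝒪/𝔪` into `K/𝔪`. -/
noncomputable def residueToQuot (v : Valuation K Γ₀) :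
    (v.integer ⧸ maxIdealO v) →ₗ[v.integer] K ⧸ maxIdealSub v :=
  Submodule.mapQ _ _ (Algebra.linearMap v.integer K) le_rfl

open Function

section BackAndForth

variable (R M : Type*) {N : Type*} [Ring R] [AddCommGroup M] [Module R M]
  [AddCommGroup N] [Module R N]

def IsDivisibleModule : Prop := ∀ a : R, a ≠ 0 → ∀ m : M, ∃ x : M, a • x = m

def IsUniserialModule : Prop := ∀ x y : M, (∃ c : R, x = c • y) ∨ (∃ c : R, y = c • x)

variable {R M}

theorem IsDivisibleModule.of_surjective (h : IsDivisibleModule R M) {f : M →ₗ[R] N}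
    (hf : Surjective f) : IsDivisibleModule R N := by
  intro a ha n
  obtain ⟨m, rfl⟩ := hf n
  obtain ⟨x, rfl⟩ := h a ha m
  exact ⟨f x, (map_smul f a x).symm⟩

theorem IsUniserialModule.of_surjective (h : IsUniserialModule R M) {f : M →ₗ[R] N}
    (hf : Surjective f) : IsUniserialModule R N := by
  intro x y
  obtain ⟨x, rfl⟩ := hf x
  obtain ⟨y, rfl⟩ := hf y
  rcases h x y with ⟨c, rfl⟩ | ⟨c, rfl⟩
  · exact .inl ⟨c, map_smul f c y⟩
  · exact .inr ⟨c, map_smul f c x⟩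

theorem IsUniserialModule.exists_pair_divisor (hM : IsUniserialModule R M)
    (hN : IsDivisibleModule R N) {a : M} (ha : a ≠ 0) (b : N) (x : M) :
    ∃ (c : R) (a' : M) (b' : N), a = c • a' ∧ b = c • b' ∧ ∃ t : R, x = t • a' := by
  rcases hM x a with hx | ⟨c, rfl⟩
  · exact ⟨1, a, b, (one_smul R a).symm, (one_smul R b).symm, hx⟩
  · have hc : c ≠ 0 := by rintro rfl; exact ha (zero_smul R x)
    obtain ⟨b', rfl⟩ := hN c hc b
    exact ⟨c, x, b', rfl, rfl, 1, (one_smul R x).symm⟩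

theorem Submodule.exists_linearEquiv_of_isGraph (G : Submodule R (M × N))
    (hG : ∀ q ∈ G, q.1 = 0 ↔ q.2 = 0) (h₁ : ∀ x, ∃ y, (x, y) ∈ G) (h₂ : ∀ y, ∃ x, (x, y) ∈ G) :
    ∃ f : M ≃ₗ[R] N, ∀ x y, (x, y) ∈ G → f x = y := by
  have hfst : Bijective (LinearMap.fst R M N ∘ₗ G.subtype) := by
    refine ⟨(injective_iff_map_eq_zero _).mpr fun ⟨q, hq⟩ h ↦ ?_, fun x ↦ ?_⟩
    · exact Subtype.ext (Prod.ext h ((hG q hq).mp h))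
    · obtain ⟨y, hy⟩ := h₁ x
      exact ⟨⟨(x, y), hy⟩, rfl⟩
  have hsnd : Bijective (LinearMap.snd R M N ∘ₗ G.subtype) := by
    refine ⟨(injective_iff_map_eq_zero _).mpr fun ⟨q, hq⟩ h ↦ ?_, fun y ↦ ?_⟩
    · exact Subtype.ext (Prod.ext ((hG q hq).mpr h) h)
    · obtain ⟨x, hx⟩ := h₂ y
      exact ⟨⟨(x, y), hx⟩, rfl⟩
  refine ⟨(LinearEquiv.ofBijective _ hfst).symm ≪≫ₗ LinearEquiv.ofBijective _ hsnd,
    fun x y h ↦ ?_⟩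
  have : (LinearEquiv.ofBijective _ hfst).symm x = ⟨(x, y), h⟩ :=
    (LinearEquiv.ofBijective _ hfst).symm_apply_eq.mpr rfl
  simp [this]

variable (R) (eM : M) (eN : N)

/-- Once the annihilators of matched `a` and `b` agree, each `R ∙ (a, b)` is the graph of an
isomorphism `R ∙ a ≃ R ∙ b`: these are the finite stages of the back-and-forth. -/
def matchedSpans : Set (Submodule R (M × N)) :=
  {S | ∃ (a : M) (b : N) (u : R), S = R ∙ (a, b) ∧ u • a = eM ∧ u • b = eN}

variable {R eM eN}

theorem fst_eq_zero_iff_snd_eq_zero_of_mem_matchedSpans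
    (hann : ∀ (u t : R) (a : M) (b : N), u • a = eM → u • b = eN → (t • a = 0 ↔ t • b = 0))
    {S : Submodule R (M × N)} (hS : S ∈ matchedSpans R eM eN) {q : M × N} (hq : q ∈ S) :
    q.1 = 0 ↔ q.2 = 0 := by
  obtain ⟨a, b, u, rfl, ha, hb⟩ := hS
  obtain ⟨t, rfl⟩ := Submodule.mem_span_singleton.mp hq
  exact hann u t a b ha hb

theorem isCofinal_matchedSpans_fst (hM : IsUniserialModule R M) (hN : IsDivisibleModule R N)
    (heM : eM ≠ 0) (x : M) :
    IsCofinal {S : matchedSpans R eM eN | x ∈ S.1.map (LinearMap.fst R M N)} := by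
  rintro ⟨_, a, b, u, rfl, ha, hb⟩
  have ha0 : a ≠ 0 := by rintro rfl; exact heM (ha ▸ smul_zero u)
  obtain ⟨c, a', b', rfl, rfl, t, rfl⟩ := hM.exists_pair_divisor hN ha0 b x
  refine ⟨⟨R ∙ (a', b'), a', b', u * c, rfl, by rw [mul_smul, ha], by rw [mul_smul, hb]⟩, ?_, ?_⟩
  · exact ⟨t • (a', b'), Submodule.smul_mem _ t (Submodule.mem_span_singleton_self _), rfl⟩
  · exact Submodule.span_singleton_le_iff_mem _ _ |>.mpr
      (Submodule.mem_span_singleton.mpr ⟨c, rfl⟩)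

theorem isCofinal_matchedSpans_snd (hM : IsDivisibleModule R M) (hN : IsUniserialModule R N)
    (heN : eN ≠ 0) (y : N) :
    IsCofinal {S : matchedSpans R eM eN | y ∈ S.1.map (LinearMap.snd R M N)} := by
  rintro ⟨_, a, b, u, rfl, ha, hb⟩
  have hb0 : b ≠ 0 := by rintro rfl; exact heN (hb ▸ smul_zero u)
  obtain ⟨c, b', a', rfl, rfl, t, rfl⟩ := hN.exists_pair_divisor hM hb0 a y
  refine ⟨⟨R ∙ (a', b'), a', b', u * c, rfl, by rw [mul_smul, ha], by rw [mul_smul, hb]⟩, ?_, ?_⟩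
  · exact ⟨t • (a', b'), Submodule.smul_mem _ t (Submodule.mem_span_singleton_self _), rfl⟩
  · exact Submodule.span_singleton_le_iff_mem _ _ |>.mpr
      (Submodule.mem_span_singleton.mpr ⟨c, rfl⟩)

theorem exists_linearEquiv_apply_eq_of_countable [Countable M] [Countable N]
    (hdivM : IsDivisibleModule R M) (huniM : IsUniserialModule R M)
    (hdivN : IsDivisibleModule R N) (huniN : IsUniserialModule R N) (heM : eM ≠ 0)
    (hann : ∀ (u t : R) (a : M) (b : N), u • a = eM → u • b = eN → (t • a = 0 ↔ t • b = 0)) :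
    ∃ f : M ≃ₗ[R] N, f eM = eN := by
  have heN : eN ≠ 0 := by
    have h := hann 1 1 eM eN (one_smul R eM) (one_smul R eN)
    rw [one_smul, one_smul] at h
    exact h.not.mp heM
  have := Encodable.ofCountable (M ⊕ N)
  let 𝒟 : M ⊕ N → Order.Cofinal (matchedSpans R eM eN) :=
    Sum.elim (fun x ↦ ⟨_, isCofinal_matchedSpans_fst huniM hdivN heM x⟩)
      (fun y ↦ ⟨_, isCofinal_matchedSpans_snd hdivM huniN heN y⟩)
  let S₀ : matchedSpans R eM eN := ⟨R ∙ (eM, eN), eM, eN, 1, rfl, one_smul R eM, one_smul R eN⟩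
  let S := Order.sequenceOfCofinals S₀ 𝒟
  let G := ⨆ n, (S n).1
  have mem_G {q : M × N} : q ∈ G ↔ ∃ n, q ∈ (S n).1 :=
    Submodule.mem_iSup_of_directed (fun n ↦ (S n).1)
      ((Order.sequenceOfCofinals.monotone S₀ 𝒟).directed_le)
  refine G.exists_linearEquiv_of_isGraph (fun q hq ↦ ?_) (fun x ↦ ?_) (fun y ↦ ?_) |>.imp
    fun f hf ↦ hf eM eN (mem_G.mpr ⟨0, Submodule.mem_span_singleton_self (eM, eN)⟩)
  · obtain ⟨n, hn⟩ := mem_G.mp hq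
    exact fst_eq_zero_iff_snd_eq_zero_of_mem_matchedSpans hann (S n).2 hn
  · obtain ⟨q, hq, rfl⟩ := Order.sequenceOfCofinals.encode_mem S₀ 𝒟 (.inl x)
    exact ⟨q.2, mem_G.mpr ⟨_, hq⟩⟩
  · obtain ⟨q, hq, rfl⟩ := Order.sequenceOfCofinals.encode_mem S₀ 𝒟 (.inr y)
    exact ⟨q.1, mem_G.mpr ⟨_, hq⟩⟩

end BackAndForth

section Valuation

variable (v : Valuation K Γ₀)

theorem maxIdealO_ne_top : maxIdealO v ≠ ⊤ := by
  rw [Ne, Ideal.eq_top_iff_one]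
  intro h
  have h' : v ((1 : v.integer) : K) < 1 := h
  simp at h'

instance : Nontrivial (v.integer ⧸ maxIdealO v) :=
  Ideal.Quotient.nontrivial_iff.mpr (maxIdealO_ne_top v)

theorem residueToQuot_injective : Injective (residueToQuot v) := by
  refine (injective_iff_map_eq_zero _).mpr fun z hz ↦ ?_
  obtain ⟨t, rfl⟩ := Submodule.Quotient.mk_surjective _ z
  have hz' : (Submodule.Quotient.mk (t : K) : K ⧸ maxIdealSub v) = 0 := hz
  exact (Submodule.Quotient.mk_eq_zero _).mpr
    ((Submodule.Quotient.mk_eq_zero (maxIdealSub v)).mp hz')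

theorem Valuation.isDivisibleModule_integer : IsDivisibleModule v.integer K := by
  intro c hc g
  refine ⟨g / c, ?_⟩
  have hc' : (c : K) ≠ 0 := by exact_mod_cast hc
  simp [Subring.smul_def, mul_div_cancel₀ _ hc']

theorem Valuation.isUniserialModule_integer : IsUniserialModule v.integer K := by
  have key {g h : K} (hgh : v g ≤ v h) : ∃ c : v.integer, g = c • h := by
    rcases eq_or_ne h 0 with rfl | hh
    · exact ⟨0, by simpa using hgh⟩
    · refine ⟨⟨g / h, ?_⟩, ?_⟩
      · rw [Valuation.mem_integer_iff, map_div₀]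
        exact div_le_one_of_le₀ hgh zero_le
      · simp [Subring.smul_def, div_mul_cancel₀ _ hh]
  intro g h
  rcases le_total (v g) (v h) with hgh | hhg
  exacts [.inl (key hgh), .inr (key hhg)]

theorem smul_eq_zero_iff_valuation_lt {X : Type*} [AddCommGroup X] [Module v.integer X]
    {φ : (v.integer ⧸ maxIdealO v) →ₗ[v.integer] X} (hφ : Injective φ) {w t : v.integer} {x : X}
    (hw : w • x = φ 1) : t • x = 0 ↔ v (t : K) < v (w : K) := by
  have hv := Valuation.integer.integers v
  have hwx : w • x ≠ 0 := hw ▸ (map_ne_zero_iff φ hφ).mpr one_ne_zero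
  constructor
  · intro ht
    by_contra! hle
    obtain ⟨s, rfl⟩ := hv.dvd_of_le hle
    exact hwx (by rw [mul_comm, mul_smul, ht, smul_zero])
  · intro hlt
    obtain ⟨s, rfl⟩ := hv.dvd_of_le hlt.le
    have hs : s ∈ maxIdealO v := lt_of_not_ge fun hs ↦ hlt.not_ge <|
      calc v (w : K) = v (w : K) * 1 := (mul_one _).symm
        _ ≤ v (w : K) * v (s : K) := mul_le_mul_right hs _
        _ = v ((w * s : v.integer) : K) := by simp
    rw [mul_comm, mul_smul, hw, ← map_smul, Algebra.smul_def, mul_one,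
      Ideal.Quotient.algebraMap_eq, Ideal.Quotient.eq_zero_iff_mem.mpr hs, map_zero]

end Valuation

/-- Let `K` be a valued field with valuation ring `𝒪`, maximal ideal `𝔪`
and residue field `k`, and let `D` be a mock `K/𝔪`: a divisible `𝒪`-module equipped with an
embedding `ι : k ↪ D` such that any two elements of `D` are comparable under divisibility
by `𝒪`.  If `K` and `D` are countable, then `D` is isomorphic to `K/𝔪` as an `𝒪`-module
extension of `k`. -/
theorem mock_quotient_iso (v : Valuation K Γ₀) [Countable K]
    (D : Type*) [AddCommGroup D] [Module v.integer D] [Countable D]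
    (ι : (v.integer ⧸ maxIdealO v) →ₗ[v.integer] D) (hι : Function.Injective ι)
    (hdiv : ∀ a : v.integer, a ≠ 0 → ∀ d : D, ∃ x : D, a • x = d)
    (hmock : ∀ x y : D, (∃ c : v.integer, x = c • y) ∨ (∃ c : v.integer, y = c • x)) :
    ∃ f : (K ⧸ maxIdealSub v) ≃ₗ[v.integer] D,
      ∀ z : v.integer ⧸ maxIdealO v, f (residueToQuot v z) = ι z := by
  have hπ := (maxIdealSub v).mkQ_surjective
  have := hπ.countable
  obtain ⟨f, hf⟩ := exists_linearEquiv_apply_eq_of_countable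
    (v.isDivisibleModule_integer.of_surjective hπ) (v.isUniserialModule_integer.of_surjective hπ)
    hdiv hmock ((map_ne_zero_iff _ (residueToQuot_injective v)).mpr one_ne_zero)
    fun u t a b ha hb ↦ (smul_eq_zero_iff_valuation_lt v (residueToQuot_injective v) ha).trans
      (smul_eq_zero_iff_valuation_lt v hι hb).symm
  have hfι : f.toLinearMap ∘ₗ residueToQuot v = ι :=
    Submodule.linearMap_qext _ (LinearMap.ext_ring hf)
  exact ⟨f, fun z ↦ LinearMap.congr_fun hfι z⟩
end

section
/- Let (K, 𝒪, 𝔪) be a valued field of equicharacteristic 0 and ∂ : 𝒪 → K/𝔪 a derivation such that every fiber {y ∈ 𝒪 : ∂y = x} (for x ∈ K/𝔪) is dense in 𝒪 in the valuation topology, and such that the valuation is nontrivial. Then with Q = {x ∈ 𝒪 : ∂x = 0}, the fraction field of Q equals K. -/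
/-!
The valuation being nontrivial, `K/𝔪` is a torsion `𝒪`-module: `∂a` is killed by some nonzero
`b ∈ 𝒪`, hence by every `y` with `v y ≤ v b`. Density of the zero fiber gives such a `y` with
`∂y = 0` and `v y = v b`, and then `∂(ya) = y ∂a = 0`, so `a = (ya)/y` with `ya, y ∈ Q`.
An element of `K` outside `𝒪` has its inverse in `𝒪`.
-/

variable {K Γ₀ : Type*} [Field K] [LinearOrderedCommGroupWithZero Γ₀]

namespace Valuation

variable (v : Valuation K Γ₀)

theorem exists_div_eq_of_forall_integer {P : K → Prop}
    (h : ∀ a : v.integer, ∃ p q : K, P p ∧ P q ∧ q ≠ 0 ∧ (a : K) = p / q) (a : K) :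
    ∃ p q : K, P p ∧ P q ∧ q ≠ 0 ∧ a = p / q := by
  by_cases ha : a ∈ v.integer
  · exact h ⟨a, ha⟩
  have ha0 : a ≠ 0 := by
    rintro rfl
    exact ha (zero_mem _)
  obtain ⟨p, q, hp, hq, hq0, hpq⟩ :=
    h ⟨a⁻¹, (v.valuationSubring.mem_or_inv_mem a).resolve_left ha⟩
  have hp0 : p ≠ 0 := by
    rintro rfl
    exact inv_ne_zero ha0 (by simpa using hpq)
  exact ⟨q, p, hq, hp, hp0, by rw [← inv_inv a, show a⁻¹ = p / q from hpq, inv_div]⟩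

theorem smul_eq_zero_of_valuation_le {M : Type*} [AddCommGroup M] [Module v.integer M]
    {b y : v.integer} {m : M} (hb : b • m = 0) (hyb : v (y : K) ≤ v (b : K)) : y • m = 0 := by
  obtain ⟨u, rfl⟩ := (integer.integers v).dvd_of_le hyb
  rw [mul_comm, mul_smul, hb, smul_zero]

variable [v.IsNontrivial]

theorem exists_ne_zero_smul_eq_zero (t : K ⧸ maxIdealSub v) :
    ∃ b : v.integer, b ≠ 0 ∧ b • t = 0 := by
  by_cases ht : t = 0
  · exact ⟨1, one_ne_zero, by rw [ht, smul_zero]⟩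
  obtain ⟨c, rfl⟩ := Submodule.Quotient.mk_surjective _ t
  have hc : 1 ≤ v c := not_lt.mp fun h => ht ((Submodule.Quotient.mk_eq_zero _).mpr h)
  have hc0 : c ≠ 0 := v.ne_zero_iff.mp (zero_lt_one.trans_le hc).ne'
  obtain ⟨z, hz0, hz1⟩ := IsNontrivial.exists_lt_one (v := v)
  have hb : v (z * c⁻¹) ≤ 1 := by
    rw [map_mul, map_inv₀]
    exact mul_le_one' hz1.le (inv_le_one_of_one_le₀ hc)
  refine ⟨⟨z * c⁻¹, hb⟩, fun h => hz0 ?_, (Submodule.Quotient.mk_eq_zero _).mpr ?_⟩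
  · simpa [hc0] using congrArg Subtype.val h
  · change v (z * c⁻¹ * c) < 1
    rwa [inv_mul_cancel_right₀ hc0]

variable {v}

theorem exists_div_eq_of_dense_ker (d : v.integer → K ⧸ maxIdealSub v)
    (hleib : ∀ x y : v.integer, d (x * y) = x • d y + y • d x)
    (hdense : ∀ (a : v.integer) (γ : Γ₀), γ ≠ 0 →
      ∃ y : v.integer, d y = 0 ∧ v ((y : K) - a) < γ)
    (a : v.integer) :
    ∃ p q : v.integer, d p = 0 ∧ d q = 0 ∧ (q : K) ≠ 0 ∧ (a : K) = p / q := by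
  obtain ⟨b, hb0, hb⟩ := exists_ne_zero_smul_eq_zero v (d a)
  have hvb : v (b : K) ≠ 0 := v.ne_zero_iff.mpr (by exact_mod_cast hb0)
  obtain ⟨y, hdy, hy⟩ := hdense b (v b) hvb
  have hvy : v (y : K) = v b := v.map_eq_of_sub_lt hy
  have hy0 : (y : K) ≠ 0 := v.ne_zero_iff.mp (hvy ▸ hvb)
  refine ⟨y * a, y, ?_, hdy, hy0, ?_⟩
  · rw [hleib, hdy, smul_zero, add_zero]
    exact smul_eq_zero_of_valuation_le v hb hvy.le
  · push_cast
    field_simp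

end Valuation

theorem frac_of_constants_eq_field_general (v : Valuation K Γ₀)
    (hnontriv : ∃ x : K, x ≠ 0 ∧ v x ≠ 1)
    (d : v.integer → K ⧸ maxIdealSub v)
    (hleib : ∀ x y : v.integer, d (x * y) = x • d y + y • d x)
    (hdense : ∀ (t : K ⧸ maxIdealSub v) (a : v.integer) (γ : Γ₀), γ ≠ 0 →
      ∃ y : v.integer, d y = t ∧ v ((y : K) - (a : K)) < γ) :
    ∀ a : K, ∃ p q : K,
      (∃ hp : p ∈ v.integer, d ⟨p, hp⟩ = 0) ∧
      (∃ hq : q ∈ v.integer, d ⟨q, hq⟩ = 0) ∧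
      q ≠ 0 ∧ a = p / q := by
  obtain ⟨x, hx0, hx1⟩ := hnontriv
  have : v.IsNontrivial := ⟨x, v.ne_zero_iff.mpr hx0, hx1⟩
  refine v.exists_div_eq_of_forall_integer fun a => ?_
  obtain ⟨p, q, hp, hq, hq0, hpq⟩ :=
    Valuation.exists_div_eq_of_dense_ker d hleib (hdense 0) a
  exact ⟨p, q, ⟨p.2, hp⟩, ⟨q.2, hq⟩, hq0, hpq⟩

/-- Let `(K, 𝒪, 𝔪)` be a valued field of equicharacteristic 0 with a
nontrivial valuation, and `∂ : 𝒪 → K/𝔪` a derivation all of whose fibers are dense in `𝒪`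
for the valuation topology.  Then with `Q = {x ∈ 𝒪 : ∂x = 0}`, the fraction field of `Q`
equals `K`: every element of `K` is a ratio of two elements of `Q`. -/
theorem frac_of_constants_eq_field (v : Valuation K Γ₀) [CharZero K]
    (hres : ∀ m : ℕ, m ≠ 0 → v (m : K) = 1)
    (hnontriv : ∃ x : K, x ≠ 0 ∧ v x ≠ 1)
    (d : v.integer → K ⧸ maxIdealSub v)
    (hadd : ∀ x y : v.integer, d (x + y) = d x + d y)
    (hleib : ∀ x y : v.integer, d (x * y) = x • d y + y • d x)
    (hdense : ∀ (t : K ⧸ maxIdealSub v) (a : v.integer) (γ : Γ₀), γ ≠ 0 →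
      ∃ y : v.integer, d y = t ∧ v ((y : K) - (a : K)) < γ) :
    ∀ a : K, ∃ p q : K,
      (∃ hp : p ∈ v.integer, d ⟨p, hp⟩ = 0) ∧
      (∃ hq : q ∈ v.integer, d ⟨q, hq⟩ = 0) ∧
      q ≠ 0 ∧ a = p / q :=
  frac_of_constants_eq_field_general v hnontriv d hleib hdense
end

section
/- Let R be an integral domain, K = Frac(R), and suppose R ≠ K, R is local with maximal ideal I ≠ 0. Then the family {aR : a ∈ K^×} is a neighborhood basis of 0 for a nondiscrete Hausdorff ring topology on K: that is, (i) for a, b ∈ K^× there is c ∈ K^× with cR ⊆ aR ∩ bR; (ii) for every a ∈ K^× there is b ∈ K^× with bR + bR ⊆ aR and bR·bR ⊆ aR; (iii) for every a ∈ K^× and x ∈ K there is b ∈ K^× with x·bR ⊆ aR; (iv) ⋂_{a ∈ K^×} aR = {0}. -/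
/-- The basic neighborhood `aR = {a·r : r ∈ R}` of `0` in `K`. -/
def rball {K : Type*} [Field K] (R : Subring K) (a : K) : Set K :=
  (fun r => a * r) '' (R : Set K)

/-!
Everything reduces to two observations. Writing `a = p / q` with `p, q ∈ R` gives a nonzero
`p = a q ∈ R ∩ aR`, and then `pR` lies in `aR` and is closed under sums and products, which gives
(i) and (ii); (iii) is rescaling. For (iv), if `x ≠ 0` lay in every `aR`, then `x ∈ (x / z) R`,
i.e. `z ∈ R`, for every `z ≠ 0`, so `R = K`.
-/

namespace rball

variable {K : Type*} [Field K] (R : Subring K) {a b x y : K}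

theorem mem_iff_inv_mul_mem (ha : a ≠ 0) : x ∈ rball R a ↔ a⁻¹ * x ∈ R := by
  refine ⟨?_, fun h => ⟨a⁻¹ * x, h, mul_inv_cancel_left₀ ha x⟩⟩
  rintro ⟨r, hr, rfl⟩
  rwa [inv_mul_cancel_left₀ ha]

theorem zero_mem (a : K) : (0 : K) ∈ rball R a := ⟨0, R.zero_mem, mul_zero a⟩

theorem mem_self (a : K) : a ∈ rball R a := ⟨1, R.one_mem, mul_one a⟩

variable {R}

theorem mul_mem_of_mem_subring (hx : x ∈ rball R a) (hb : b ∈ R) : x * b ∈ rball R a := by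
  obtain ⟨r, hr, rfl⟩ := hx
  exact ⟨r * b, R.mul_mem hr hb, (mul_assoc a r b).symm⟩

theorem subset_of_mem (hb : b ∈ rball R a) : rball R b ⊆ rball R a := by
  rintro _ ⟨r, hr, rfl⟩
  exact mul_mem_of_mem_subring hb hr

theorem add_mem (hx : x ∈ rball R a) (hy : y ∈ rball R a) : x + y ∈ rball R a := by
  obtain ⟨r, hr, rfl⟩ := hx
  obtain ⟨s, hs, rfl⟩ := hy
  exact ⟨r + s, R.add_mem hr hs, mul_add a r s⟩

theorem mul_mem_mul (hx : x ∈ rball R a) (hy : y ∈ rball R b) : x * y ∈ rball R (a * b) := by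
  obtain ⟨r, hr, rfl⟩ := hx
  obtain ⟨s, hs, rfl⟩ := hy
  exact ⟨r * s, R.mul_mem hr hs, mul_mul_mul_comm a b r s⟩

theorem mul_mem_mul_left (x : K) (hy : y ∈ rball R a) : x * y ∈ rball R (x * a) := by
  obtain ⟨r, hr, rfl⟩ := hy
  exact ⟨r, hr, mul_assoc x a r⟩

theorem exists_ne_zero_mem_subring_mem
    (hfrac : ∀ x : K, ∃ p ∈ R, ∃ q ∈ R, q ≠ 0 ∧ x = p / q) (ha : a ≠ 0) :
    ∃ p ∈ R, p ≠ 0 ∧ p ∈ rball R a := by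
  obtain ⟨p, hp, q, hq, hq0, rfl⟩ := hfrac a
  exact ⟨p, hp, (div_ne_zero_iff.mp ha).1, q, hq, div_mul_cancel₀ p hq0⟩

theorem exists_subset_inter
    (hfrac : ∀ x : K, ∃ p ∈ R, ∃ q ∈ R, q ≠ 0 ∧ x = p / q)
    (ha : a ≠ 0) (hb : b ≠ 0) :
    ∃ c : K, c ≠ 0 ∧ rball R c ⊆ rball R a ∩ rball R b := by
  obtain ⟨p, hpR, hp0, hpa⟩ := exists_ne_zero_mem_subring_mem hfrac ha
  obtain ⟨q, hqR, hq0, hqb⟩ := exists_ne_zero_mem_subring_mem hfrac hb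
  refine ⟨p * q, mul_ne_zero hp0 hq0, Set.subset_inter ?_ ?_⟩
  · exact subset_of_mem (mul_mem_of_mem_subring hpa hqR)
  · exact subset_of_mem (mul_comm q p ▸ mul_mem_of_mem_subring hqb hpR)

theorem exists_add_mem_and_mul_mem
    (hfrac : ∀ x : K, ∃ p ∈ R, ∃ q ∈ R, q ≠ 0 ∧ x = p / q)
    (ha : a ≠ 0) :
    ∃ b : K, b ≠ 0 ∧
      ∀ x ∈ rball R b, ∀ y ∈ rball R b, x + y ∈ rball R a ∧ x * y ∈ rball R a := by
  obtain ⟨p, hpR, hp0, hpa⟩ := exists_ne_zero_mem_subring_mem hfrac ha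
  have hpp : rball R (p * p) ⊆ rball R p := subset_of_mem (mul_mem_of_mem_subring (mem_self R p) hpR)
  exact ⟨p, hp0, fun x hx y hy =>
    ⟨subset_of_mem hpa (add_mem hx hy), subset_of_mem hpa (hpp (mul_mem_mul hx hy))⟩⟩

theorem exists_mul_mem (ha : a ≠ 0) (x : K) :
    ∃ b : K, b ≠ 0 ∧ ∀ y ∈ rball R b, x * y ∈ rball R a := by
  rcases eq_or_ne x 0 with rfl | hx
  · exact ⟨a, ha, fun y _ => (zero_mul y).symm ▸ zero_mem R a⟩
  · refine ⟨x⁻¹ * a, mul_ne_zero (inv_ne_zero hx) ha, fun y hy => ?_⟩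
    simpa only [mul_inv_cancel_left₀ hx] using mul_mem_mul_left x hy

theorem forall_mem_iff_eq_zero (hR : (R : Set K) ≠ Set.univ) :
    (∀ a : K, a ≠ 0 → x ∈ rball R a) ↔ x = 0 := by
  refine ⟨fun h => ?_, by rintro rfl a -; exact zero_mem R a⟩
  by_contra hx
  refine hR (Set.eq_univ_of_forall fun z => ?_)
  rcases eq_or_ne z 0 with rfl | hz
  · exact R.zero_mem
  · have hxz := div_ne_zero hx hz
    have h_inv_mul := (mem_iff_inv_mul_mem R hxz).1 (h _ hxz)
    rwa [inv_div, div_mul_cancel₀ z hx] at h_inv_mul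

end rball

theorem local_subring_topology_general {K : Type*} [Field K] (R : Subring K)
    (hproper : (R : Set K) ≠ Set.univ)
    (hfrac : ∀ x : K, ∃ p ∈ R, ∃ q ∈ R, q ≠ 0 ∧ x = p / q) :
    (∀ a b : K, a ≠ 0 → b ≠ 0 →
        ∃ c : K, c ≠ 0 ∧ rball R c ⊆ rball R a ∩ rball R b) ∧
    (∀ a : K, a ≠ 0 → ∃ b : K, b ≠ 0 ∧
        ∀ x ∈ rball R b, ∀ y ∈ rball R b, x + y ∈ rball R a ∧ x * y ∈ rball R a) ∧
    (∀ a : K, a ≠ 0 → ∀ x : K, ∃ b : K, b ≠ 0 ∧ ∀ y ∈ rball R b, x * y ∈ rball R a) ∧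
    (∀ x : K, (∀ a : K, a ≠ 0 → x ∈ rball R a) ↔ x = 0) :=
  ⟨fun _ _ ha hb => rball.exists_subset_inter hfrac ha hb,
    fun _ ha => rball.exists_add_mem_and_mul_mem hfrac ha,
    fun _ ha x => rball.exists_mul_mem ha x,
    fun _ => rball.forall_mem_iff_eq_zero hproper⟩

/-- Let `R` be a proper local subring of a field `K` with `K = Frac R`
and nonzero maximal ideal.  Then the family `{aR : a ∈ K^×}` is a neighborhood basis of `0`
for a nondiscrete Hausdorff ring topology on `K`:
(i) any two basic sets contain a common basic set;
(ii) each basic set `aR` admits `bR` with `bR + bR ⊆ aR` and `bR·bR ⊆ aR`;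
(iii) each `aR` absorbs multiplication by any fixed `x ∈ K`;
(iv) the intersection of all basic sets is `{0}`. -/
theorem local_subring_topology {K : Type*} [Field K] (R : Subring K)
    [IsLocalRing R]
    (hproper : (R : Set K) ≠ Set.univ)
    (hfrac : ∀ x : K, ∃ p ∈ R, ∃ q ∈ R, q ≠ 0 ∧ x = p / q)
    (hI : IsLocalRing.maximalIdeal R ≠ ⊥) :
    (∀ a b : K, a ≠ 0 → b ≠ 0 →
        ∃ c : K, c ≠ 0 ∧ rball R c ⊆ rball R a ∩ rball R b) ∧
    (∀ a : K, a ≠ 0 → ∃ b : K, b ≠ 0 ∧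
        ∀ x ∈ rball R b, ∀ y ∈ rball R b, x + y ∈ rball R a ∧ x * y ∈ rball R a) ∧
    (∀ a : K, a ≠ 0 → ∀ x : K, ∃ b : K, b ≠ 0 ∧ ∀ y ∈ rball R b, x * y ∈ rball R a) ∧
    (∀ x : K, (∀ a : K, a ≠ 0 → x ∈ rball R a) ↔ x = 0) :=
  local_subring_topology_general R hproper hfrac
end

section
/- Let Γ be a ℤ-less ordered abelian group, meaning: for every a > 0 in Γ there exists b ∈ Γ with a < 3b < 2a. Then for every a > 0 in Γ and every pair of rationals p < q, writing p = r/n and q = u/n with a common denominator n > 0, there exists b ∈ Γ with r·a < n·b < u·a. -/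
/-- Let `Γ` be a ℤ-less ordered abelian group: for every `a > 0` there is
`b` with `a < 3b < 2a`.  Then for every `a > 0`, all integers `r < u` and every `n ≥ 1`,
there is `b ∈ Γ` with `r·a < n·b < u·a` (i.e. `p·a < b < q·a` for the rationals
`p = r/n < q = u/n`, after clearing denominators). -/
theorem zless_rational_density {Γ : Type*} [AddCommGroup Γ] [LinearOrder Γ] [IsOrderedAddMonoid Γ]
    (hzless : ∀ a : Γ, 0 < a → ∃ b : Γ, a < 3 • b ∧ 3 • b < 2 • a) :
    ∀ a : Γ, 0 < a → ∀ r u : ℤ, r < u → ∀ n : ℕ, 0 < n →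
      ∃ b : Γ, r • a < (n : ℤ) • b ∧ (n : ℤ) • b < u • a := by
  -- Key iteration: small positive elements comparable to `a`.
  have key : ∀ m : ℕ, ∀ a : Γ, 0 < a →
      ∃ c : Γ, a < 3 ^ (m + 1) • c ∧ 3 ^ (m + 1) • c < 2 ^ (m + 1) • a := by
    intro m
    induction m with
    | zero =>
      intro a ha
      simpa using hzless a ha
    | succ m ih =>
      intro a ha
      obtain ⟨c, hc1, hc2⟩ := ih a ha
      have hcpos : 0 < c := by
        by_contra h
        push_neg at h
        have h1 : (3 ^ (m + 1) : ℕ) • c ≤ 3 ^ (m + 1) • (0 : Γ) :=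
          nsmul_le_nsmul_right h _
        rw [smul_zero] at h1
        exact (ha.trans hc1).not_ge h1
      obtain ⟨d, hd1, hd2⟩ := hzless c hcpos
      refine ⟨d, ?_, ?_⟩
      · have : (3 ^ (m + 1) : ℕ) • c < 3 ^ (m + 1) • (3 • d) :=
          nsmul_lt_nsmul_right (by positivity) hd1
        calc a < 3 ^ (m + 1) • c := hc1
          _ < 3 ^ (m + 1) • (3 • d) := this
          _ = 3 ^ (m + 2) • d := by rw [smul_smul, ← pow_succ]
      · calc (3 ^ (m + 2) : ℕ) • d = 3 ^ (m + 1) • (3 • d) := by rw [smul_smul, ← pow_succ]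
          _ < 3 ^ (m + 1) • (2 • c) := nsmul_lt_nsmul_right (by positivity) hd2
          _ = 2 • ((3 ^ (m + 1) : ℕ) • c) := by rw [smul_smul, smul_smul, Nat.mul_comm]
          _ < 2 • ((2 ^ (m + 1) : ℕ) • a) := nsmul_lt_nsmul_right (by norm_num) hc2
          _ = 2 ^ (m + 2) • a := by rw [smul_smul, ← pow_succ']
  intro a ha r u hru n hn
  -- choose m with n * 2^m ≤ 3^m, m = 2n+2 works
  set m : ℕ := 2 * n + 2 with hm
  have hnm : n * 2 ^ m ≤ 3 ^ m := by
    have h1 : n ≤ 2 ^ (n + 1) := (Nat.lt_two_pow_self (n := n)).le.trans (Nat.pow_le_pow_right (by norm_num) (Nat.le_succ n))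
    calc n * 2 ^ m ≤ 2 ^ (n + 1) * 2 ^ m := Nat.mul_le_mul_right _ h1
      _ = 2 ^ (3 * (n + 1)) := by rw [← pow_add, hm]; ring_nf
      _ = 8 ^ (n + 1) := by rw [pow_mul]; norm_num
      _ ≤ 9 ^ (n + 1) := Nat.pow_le_pow_left (by norm_num) _
      _ = 3 ^ m := by rw [hm, show 2 * n + 2 = 2 * (n + 1) by ring, pow_mul]; norm_num
  obtain ⟨c, hc1, hc2⟩ := key (2 * n + 1) a ha
  rw [show 2 * n + 1 + 1 = m from rfl] at hc1 hc2
  have hcpos : 0 < c := by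
    by_contra h
    push_neg at h
    have h1 : (3 ^ m : ℕ) • c ≤ 3 ^ m • (0 : Γ) := nsmul_le_nsmul_right h _
    rw [smul_zero] at h1
    exact (ha.trans hc1).not_ge h1
  set s : Γ := n • c with hs
  have hspos : 0 < s := by
    have : (0 : Γ) = n • (0 : Γ) := (smul_zero n).symm
    rw [hs, this]
    exact nsmul_lt_nsmul_right hn.ne' hcpos
  have hsa : s < a := by
    have h1 : (3 ^ m : ℕ) • s = n • ((3 ^ m : ℕ) • c) := by
      rw [hs, smul_smul, smul_smul, Nat.mul_comm]
    have h2 : n • ((3 ^ m : ℕ) • c) < n • ((2 ^ m : ℕ) • a) :=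
      nsmul_lt_nsmul_right hn.ne' hc2
    have h3 : n • ((2 ^ m : ℕ) • a) = (n * 2 ^ m) • a := by rw [smul_smul]
    have h4 : (n * 2 ^ m) • a ≤ (3 ^ m : ℕ) • a := nsmul_le_nsmul_left ha.le hnm
    have h5 : (3 ^ m : ℕ) • s < (3 ^ m : ℕ) • a := by
      rw [h1]; exact h2.trans_le (h3 ▸ h4)
    exact lt_of_nsmul_lt_nsmul_right _ h5
  have haM : a < (3 ^ m : ℕ) • s := by
    have h1 : c ≤ s := by
      calc c = 1 • c := (one_smul ℕ c).symm
        _ ≤ n • c := nsmul_le_nsmul_left hcpos.le hn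
    exact hc1.trans_le (nsmul_le_nsmul_right h1 _)
  -- switch to ℤ-scalars
  set M : ℤ := (3 : ℤ) ^ m with hM
  have haMz : a < M • s := by
    have : ((3 ^ m : ℕ) : ℤ) • s = (3 ^ m : ℕ) • s := natCast_zsmul s _
    rw [hM, show ((3:ℤ)) ^ m = ((3 ^ m : ℕ) : ℤ) by push_cast; ring, this]
    exact haM
  set K : ℤ := (|r| + 1) * M with hK
  have hKs : (|r| + 1) • a < K • s := by
    rw [hK, mul_smul]
    exact zsmul_lt_zsmul_right (by positivity) haMz
  have hra : r • a < (|r| + 1) • a :=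
    zsmul_lt_zsmul_left ha (lt_of_le_of_lt (le_abs_self r) (lt_add_one _))
  have hnonempty : ∃ k : ℤ, r • a < k • s := ⟨K, hra.trans hKs⟩
  have hbdd : ∃ b : ℤ, ∀ k : ℤ, r • a < k • s → b ≤ k := by
    refine ⟨-K, fun k hk => ?_⟩
    by_contra h
    push_neg at h
    have h1 : k • s ≤ (-K) • s := zsmul_le_zsmul_left hspos.le h.le
    have h2 : (-K) • s = -(K • s) := neg_smul K s
    have h3 : -(K • s) < -((|r| + 1) • a) := neg_lt_neg hKs
    have h4 : -((|r| + 1) • a) = (-(|r| + 1)) • a := (neg_smul _ a).symm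
    have h5 : (-(|r| + 1)) • a < r • a :=
      zsmul_lt_zsmul_left ha (by
        have := neg_abs_le r
        omega)
    have : k • s < r • a := by
      calc k • s ≤ -(K • s) := h2 ▸ h1
        _ < r • a := h3.trans_le (le_of_eq_of_le h4 h5.le)
    exact absurd hk this.not_gt
  obtain ⟨k, hk, hkmin⟩ := Int.exists_least_of_bdd hbdd hnonempty
  have hk1 : (k - 1) • s ≤ r • a := by
    by_contra h
    push_neg at h
    have := hkmin (k - 1) h
    omega
  have hupper : k • s < u • a := by
    have h1 : k • s = (k - 1) • s + s := by
      rw [sub_smul, one_smul, sub_add_cancel]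
    have h2 : k • s < r • a + a := by
      rw [h1]
      calc (k - 1) • s + s ≤ r • a + s := add_le_add_left hk1 s
        _ < r • a + a := add_lt_add_right hsa _
    have h3 : r • a + a = (r + 1) • a := by rw [add_smul, one_smul]
    have h4 : (r + 1) • a ≤ u • a := zsmul_le_zsmul_left ha.le hru
    exact h2.trans_le (h3 ▸ h4)
  refine ⟨k • c, ?_, ?_⟩
  · have : (n : ℤ) • (k • c) = k • s := by
      rw [smul_comm, hs, natCast_zsmul]
    rw [this]; exact hk
  · have : (n : ℤ) • (k • c) = k • s := by
      rw [smul_comm, hs, natCast_zsmul]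
    rw [this]; exact hupper
end

section
/- Let L/K be an algebraic extension of valued fields whose value group Γ_K (of K) is ℤ-less (for every γ > 0 in Γ_K there is δ ∈ Γ_K with γ < 3δ < 2γ). Let a ∈ 𝒪_L be nonzero with val(a) > 0 and aⁿ ∈ K for some n ≥ 1. Then there exist b, c ∈ 𝒪_L such that a = b·cⁿ, b·c^{n−1} ∈ K, and cⁿ ∈ K. -/
/-!
Write `γ = val a > 0`. It suffices to find `e ∈ K` with `(n - 1) γ ≤ n val e ≤ n γ`: then
`b = eⁿ / aⁿ⁻¹` and `c = a / e` are integral, `b cⁿ⁻¹ = e` and `cⁿ = aⁿ / eⁿ`.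
Iterating ℤ-lessness `k` times from `val aⁿ = n γ` gives `y ∈ K` with
`n γ ≤ 3^k val y ≤ 2^k n γ`; once `2^k n² ≤ 3^k` this says `n val y ≤ γ`, while `val y` is not
infinitesimal compared with `γ` (the value group need not be archimedean). Hence there is a
least `j` with `n j val y ≥ (n - 1) γ`, and `e = y^j` works.
-/

lemma exists_two_pow_mul_le_three_pow (c : ℕ) : ∃ k : ℕ, 2 ^ k * c ≤ 3 ^ k := by
  obtain ⟨k, hk⟩ := pow_unbounded_of_one_lt (c : ℚ) (by norm_num : (1 : ℚ) < 3 / 2)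
  refine ⟨k, ?_⟩
  rw [div_pow, lt_div_iff₀ (by positivity)] at hk
  exact_mod_cast (by linarith : (2 : ℚ) ^ k * c ≤ 3 ^ k)

lemma exists_le_pow_and_pow_pow_succ_le {Γ₀ : Type*} [LinearOrderedCommGroupWithZero Γ₀]
    {α μ : Γ₀} {m : ℕ} (hα : α ≤ 1) (hαμ : α ≤ μ ^ (m + 1))
    (hbound : ∃ N, (μ ^ N) ^ (m + 1) ≤ α ^ m) :
    ∃ j, α ≤ μ ^ j ∧ (μ ^ j) ^ (m + 1) ≤ α ^ m := by
  classical
  obtain ⟨j, hj, hmin⟩ : ∃ j, (μ ^ j) ^ (m + 1) ≤ α ^ m ∧ ∀ i < j, α ^ m < (μ ^ i) ^ (m + 1) :=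
    ⟨Nat.find hbound, Nat.find_spec hbound, fun i hi => not_le.mp (Nat.find_min hbound hi)⟩
  refine ⟨j, ?_, hj⟩
  cases j with
  | zero => rwa [pow_zero]
  | succ i =>
    refine le_of_pow_le_pow_left₀ m.succ_ne_zero zero_le ?_
    calc α ^ (m + 1) = α ^ m * α := pow_succ α m
      _ ≤ (μ ^ i) ^ (m + 1) * μ ^ (m + 1) := mul_le_mul' (hmin i i.lt_succ_self).le hαμ
      _ = (μ ^ (i + 1)) ^ (m + 1) := by rw [pow_succ μ i, mul_pow]

/-- ℤ-lessness of the value group of `K`, written multiplicatively: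
`v x ^ 2 < v y ^ 3 < v x` reads `val x < 3 val y < 2 val x`. -/
def Valuation.IsZLessOn {L Γ₀ : Type*} [Field L] [LinearOrderedCommGroupWithZero Γ₀]
    (v : Valuation L Γ₀) (K : Subfield L) : Prop :=
  ∀ x : L, x ∈ K → x ≠ 0 → v x < 1 →
    ∃ y : L, y ∈ K ∧ y ≠ 0 ∧ (v x) ^ 2 < (v y) ^ 3 ∧ (v y) ^ 3 < v x

namespace Valuation.IsZLessOn

variable {L Γ₀ : Type*} [Field L] [LinearOrderedCommGroupWithZero Γ₀]
  {v : Valuation L Γ₀} {K : Subfield L}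

lemma exists_pow_bounds (hK : v.IsZLessOn K) (k : ℕ) {x : L} (hxK : x ∈ K) (hx0 : x ≠ 0)
    (hx1 : v x < 1) :
    ∃ y ∈ K, v x ^ 2 ^ k ≤ v y ^ 3 ^ k ∧ v y ^ 3 ^ k ≤ v x := by
  induction k generalizing x with
  | zero => exact ⟨x, hxK, by simp⟩
  | succ k ih =>
    obtain ⟨y₁, hy₁K, hy₁0, hlow₁, hhigh₁⟩ := hK x hxK hx0 hx1
    have hy₁1 : v y₁ < 1 := (pow_lt_one_iff three_ne_zero).mp (hhigh₁.trans hx1)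
    obtain ⟨y, hyK, hlow, hhigh⟩ := ih hy₁K hy₁0 hy₁1
    refine ⟨y, hyK, ?_, ?_⟩
    · calc v x ^ 2 ^ (k + 1) = (v x ^ 2) ^ 2 ^ k := by rw [← pow_mul, pow_succ']
        _ ≤ (v y₁ ^ 3) ^ 2 ^ k := pow_le_pow_left' hlow₁.le _
        _ = (v y₁ ^ 2 ^ k) ^ 3 := by rw [← pow_mul, ← pow_mul, mul_comm]
        _ ≤ (v y ^ 3 ^ k) ^ 3 := pow_le_pow_left' hlow _
        _ = v y ^ 3 ^ (k + 1) := by rw [← pow_mul, pow_succ]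
    · calc v y ^ 3 ^ (k + 1) = (v y ^ 3 ^ k) ^ 3 := by rw [← pow_mul, pow_succ]
        _ ≤ v y₁ ^ 3 := pow_le_pow_left' hhigh _
        _ ≤ v x := hhigh₁.le

lemma exists_mem_le_valuation_and_pow_le (hK : v.IsZLessOn K) {a : L} (ha : a ≠ 0)
    (hva : v a < 1) {m : ℕ} (haK : a ^ (m + 1) ∈ K) :
    ∃ e ∈ K, v a ≤ v e ∧ v e ^ (m + 1) ≤ v a ^ m := by
  set n := m + 1
  obtain ⟨k, hk⟩ := exists_two_pow_mul_le_three_pow (n ^ 2)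
  obtain ⟨y, hyK, hlow, hhigh⟩ := hK.exists_pow_bounds k haK (pow_ne_zero n ha)
    (by rw [map_pow]; exact pow_lt_one' hva m.succ_ne_zero)
  rw [map_pow] at hlow hhigh
  have hva1 := hva.le
  have hαμ : v a ≤ v y ^ n := by
    refine le_of_pow_le_pow_left₀ (pow_ne_zero k three_ne_zero) zero_le ?_
    calc v a ^ 3 ^ k ≤ v a ^ (2 ^ k * n ^ 2) := pow_le_pow_right_of_le_one' hva1 hk
      _ = ((v a ^ n) ^ 2 ^ k) ^ n := by rw [← pow_mul, ← pow_mul]; ring_nf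
      _ ≤ (v y ^ 3 ^ k) ^ n := pow_le_pow_left' hlow n
      _ = (v y ^ n) ^ 3 ^ k := by rw [← pow_mul, ← pow_mul, mul_comm]
  have hbound : (v y ^ 3 ^ k) ^ n ≤ v a ^ m :=
    calc (v y ^ 3 ^ k) ^ n ≤ (v a ^ n) ^ n := pow_le_pow_left' hhigh n
      _ ≤ v a ^ m := by
        rw [← pow_mul]
        exact pow_le_pow_right_of_le_one' hva1 (by simp only [n]; nlinarith)
  obtain ⟨j, hj₁, hj₂⟩ := exists_le_pow_and_pow_pow_succ_le hva1 hαμ ⟨3 ^ k, hbound⟩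
  exact ⟨y ^ j, K.pow_mem hyK j, by rwa [map_pow], by rwa [map_pow]⟩

end Valuation.IsZLessOn

theorem zless_radical_factorization_general {L Γ₀ : Type*} [Field L]
    [LinearOrderedCommGroupWithZero Γ₀] (v : Valuation L Γ₀)
    (K : Subfield L)
    (hzless : ∀ x : L, x ∈ K → x ≠ 0 → v x < 1 →
      ∃ y : L, y ∈ K ∧ y ≠ 0 ∧ (v x) ^ 2 < (v y) ^ 3 ∧ (v y) ^ 3 < v x)
    (n : ℕ) (hn : 1 ≤ n) (a : L) (ha : a ≠ 0) (hva : v a < 1) (haK : a ^ n ∈ K) :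
    ∃ b c : L, v b ≤ 1 ∧ v c ≤ 1 ∧ a = b * c ^ n ∧ b * c ^ (n - 1) ∈ K ∧ c ^ n ∈ K := by
  obtain ⟨m, rfl⟩ := Nat.exists_eq_add_of_le' hn
  obtain ⟨e, heK, hae, hea⟩ :=
    Valuation.IsZLessOn.exists_mem_le_valuation_and_pow_le hzless ha hva haK
  have hva0 : 0 < v a := v.pos_iff.mpr ha
  have he : e ≠ 0 := v.pos_iff.mp (hva0.trans_le hae)
  refine ⟨e ^ (m + 1) / a ^ m, a / e, ?_, ?_, ?_, ?_, ?_⟩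
  · rwa [map_div₀, map_pow, map_pow, div_le_one₀ (pow_pos hva0 m)]
  · rwa [map_div₀, div_le_one₀ (hva0.trans_le hae)]
  · rw [div_pow]
    field_simp
    ring
  · rw [Nat.add_sub_cancel, div_pow]
    convert heK using 1
    field_simp
    ring
  · rw [div_pow]
    exact K.div_mem haK (K.pow_mem heK _)

/-- Let `L/K` be an algebraic extension of valued fields (here `K` is a
subfield of `L`, the valuation `v` on `L` is written multiplicatively, and every element of
`L` is algebraic over `K`).  Assume the value group of `K` is ℤ-less: for every `γ = v x`
with `x ∈ K^×` and `γ < 1` (additively `val x > 0`) there is `y ∈ K^×` with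
`γ² < (v y)³ < γ` (additively `val x < 3·val y < 2·val x`).  If `a ∈ 𝒪_L` is nonzero with
`val a > 0` (i.e. `v a < 1`) and `aⁿ ∈ K` for some `n ≥ 1`, then there are `b, c ∈ 𝒪_L`
with `a = b·cⁿ`, `b·c^{n−1} ∈ K` and `cⁿ ∈ K`. -/
theorem zless_radical_factorization {L Γ₀ : Type*} [Field L]
    [LinearOrderedCommGroupWithZero Γ₀] (v : Valuation L Γ₀)
    (K : Subfield L)
    (halg : ∀ x : L, ∃ p : Polynomial L, p ≠ 0 ∧ (∀ i, p.coeff i ∈ K) ∧ p.eval x = 0)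
    (hzless : ∀ x : L, x ∈ K → x ≠ 0 → v x < 1 →
      ∃ y : L, y ∈ K ∧ y ≠ 0 ∧ (v x) ^ 2 < (v y) ^ 3 ∧ (v y) ^ 3 < v x)
    (n : ℕ) (hn : 1 ≤ n) (a : L) (ha : a ≠ 0) (hva : v a < 1) (haK : a ^ n ∈ K) :
    ∃ b c : L, v b ≤ 1 ∧ v c ≤ 1 ∧ a = b * c ^ n ∧ b * c ^ (n - 1) ∈ K ∧ c ^ n ∈ K :=
  zless_radical_factorization_general v K hzless n hn a ha hva haK
end

section
/- Let 𝒪 be a valuation ring and M an 𝒪-module. Then the following are equivalent: (1) M is flat; (2) M is torsion-free (for nonzero r ∈ 𝒪 and m ∈ M, r·m = 0 implies m = 0); (3) every finitely generated submodule of M is free. -/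
/-!
A valuation ring is a local Bézout domain. Over a Bézout domain flatness is torsion-freeness,
since every finitely generated ideal is principal, hence isomorphic to the ring. Torsion-freeness
passes to submodules, and a finitely generated flat module over a local ring is free. Conversely,
free modules over a domain are torsion-free, and testing on cyclic submodules suffices.
-/

open Module

lemma Module.isTorsionFree_iff_forall_ne_zero {R M : Type*} [Ring R] [IsDomain R]
    [AddCommGroup M] [Module R M] :
    IsTorsionFree R M ↔ ∀ (r : R) (m : M), r ≠ 0 → r • m = 0 → m = 0 := by
  rw [isTorsionFree_iff_smul_eq_zero]
  exact forall₂_congr fun r m ↦ by tauto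

lemma Module.IsTorsionFree.of_free_span_singleton {R M : Type*} [CommRing R] [IsDomain R]
    [AddCommGroup M] [Module R M] (h : ∀ m : M, Free R (R ∙ m)) : IsTorsionFree R M := by
  refine isTorsionFree_iff_forall_ne_zero.mpr fun r m hr hrm ↦ ?_
  have hm : r • (⟨m, Submodule.mem_span_singleton_self m⟩ : R ∙ m) = 0 := Subtype.ext hrm
  simpa using (smul_eq_zero_iff_right hr).mp hm

namespace ValuationRing

variable {O M : Type*} [CommRing O] [IsDomain O] [ValuationRing O] [AddCommGroup M] [Module O M]

theorem flat_iff_isTorsionFree : Flat O M ↔ IsTorsionFree O M := by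
  rw [Flat.flat_iff_torsion_eq_bot_of_isBezout, Submodule.isTorsionFree_iff_torsion_eq_bot]

theorem free_of_isTorsionFree [Module.Finite O M] [IsTorsionFree O M] : Free O M :=
  have : Flat O M := flat_iff_isTorsionFree.mpr ‹_›
  free_of_flat_of_isLocalRing

end ValuationRing

open ValuationRing in
/-- Let `𝒪` be a valuation ring and `M` an `𝒪`-module.  The following
are equivalent: (1) `M` is flat; (2) `M` is torsion-free; (3) every finitely generated
submodule of `M` is free. -/
theorem valuationRing_flat_tfae {O M : Type*} [CommRing O] [IsDomain O] [ValuationRing O]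
    [AddCommGroup M] [Module O M] :
    List.TFAE [Module.Flat O M,
      ∀ (r : O) (m : M), r ≠ 0 → r • m = 0 → m = 0,
      ∀ N : Submodule O M, N.FG → Module.Free O N] := by
  tfae_have 1 ↔ 2 := flat_iff_isTorsionFree.trans isTorsionFree_iff_forall_ne_zero
  tfae_have 2 → 3 := fun htf N hN ↦
    have : IsTorsionFree O M := isTorsionFree_iff_forall_ne_zero.mpr htf
    have : Module.Finite O N := Module.Finite.iff_fg.mpr hN
    free_of_isTorsionFree
  tfae_have 3 → 2 := fun hfree ↦ isTorsionFree_iff_forall_ne_zero.mp <|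
    .of_free_span_singleton fun m ↦ hfree _ (Submodule.fg_span_singleton m)
  tfae_finish
end

section
/- Let 𝒪 ⊆ 𝒪′ be an extension of valuation rings (a local injective ring homomorphism of valuation rings, with the maximal ideal of 𝒪 mapping into that of 𝒪′). Let M be an 𝒪-module. Then M is flat over 𝒪 if and only if M ⊗_𝒪 𝒪′ is flat over 𝒪′. -/
/-!
Over a valuation ring (indeed over any Bézout domain) flat means torsion-free, so the domain `𝒪′`
is flat over `𝒪`. A flat local homomorphism of local rings is faithfully flat, and flatness
descends along faithfully flat ring maps, while it is always preserved by base change.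
-/

open scoped TensorProduct

theorem Module.Flat.of_algebraMap_injective {R S : Type*} [CommRing R] [IsDomain R] [IsBezout R]
    [CommRing S] [IsDomain S] [Algebra R S] (hinj : Function.Injective (algebraMap R S)) :
    Module.Flat R S := by
  rw [Module.Flat.flat_iff_torsion_eq_bot_of_isBezout,
    ← Submodule.isTorsionFree_iff_torsion_eq_bot]
  exact Module.isTorsionFree_iff_algebraMap_injective.mpr hinj

theorem Module.FaithfullyFlat.of_algebraMap_injective_of_isLocalHom {R S : Type*} [CommRing R]
    [IsDomain R] [ValuationRing R] [CommRing S] [IsDomain S] [IsLocalRing S] [Algebra R S]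
    (hinj : Function.Injective (algebraMap R S)) [IsLocalHom (algebraMap R S)] :
    Module.FaithfullyFlat R S :=
  have : Module.Flat R S := .of_algebraMap_injective hinj
  .of_flat_of_isLocalHom

/-- Let `𝒪 ⊆ 𝒪′` be an extension of valuation rings (an injective local
ring homomorphism of valuation rings) and `M` an `𝒪`-module.  Then `M` is flat over `𝒪` if
and only if `𝒪′ ⊗_𝒪 M` is flat over `𝒪′`. -/
theorem flat_iff_baseChange_flat {O O' M : Type*}
    [CommRing O] [IsDomain O] [ValuationRing O]
    [CommRing O'] [IsDomain O'] [ValuationRing O'] [Algebra O O']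
    (hinj : Function.Injective (algebraMap O O'))
    (hloc : ∀ x : O, IsUnit (algebraMap O O' x) → IsUnit x)
    [AddCommGroup M] [Module O M] :
    Module.Flat O M ↔ Module.Flat O' (O' ⊗[O] M) := by
  have : IsLocalHom (algebraMap O O') := ⟨hloc⟩
  have : Module.FaithfullyFlat O O' := .of_algebraMap_injective_of_isLocalHom hinj
  exact (Module.Flat.iff_flat_tensorProduct O M O').symm
end
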